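/- arXiv:2210.09703 — 3 statements merged into one kernel-verified Lean document; each statement's English description precedes it below -/
import Mathlib

section
/- Let W ⊆ C^ω be any objective and M a chromatic memory structure. If M suffices to play optimally for W in all finitely branching one-player arenas of Player 1, then W is M-progress-consistent. -/
set_option autoImplicit false

namespace RegularMemory

/-- Concatenation of a finite word with an infinite word. -/
def wcat {C : Type} (w : List C) (x : ℕ → C) : ℕ → C := fun n =>
  if h : n < w.length then w.get ⟨n, h⟩ else x (n - w.length)

/-- The infinite word `w^ω` (junk value if `w` is empty). -/
noncomputable def wpow {C : Type} [Nonempty C] : List C → ℕ → C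
  | [] => fun _ => Classical.arbitrary C
  | (a :: l) => fun n => (a :: l).get ⟨n % (a :: l).length, Nat.mod_lt n (Nat.succ_pos _)⟩

/-- Winning continuations `w⁻¹W` of the finite word `w` for the objective `W`. -/
def contAfter {C : Type} (W : Set (ℕ → C)) (w : List C) : Set (ℕ → C) :=
  {x | wcat w x ∈ W}

/-- Prefix preorder `w₁ ⪯_W w₂`. -/
def prefLe {C : Type} (W : Set (ℕ → C)) (w₁ w₂ : List C) : Prop :=
  contAfter W w₁ ⊆ contAfter W w₂

/-- Strict prefix relation `w₁ ≺_W w₂`. -/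
def prefLt {C : Type} (W : Set (ℕ → C)) (w₁ w₂ : List C) : Prop :=
  prefLe W w₁ w₂ ∧ ¬ prefLe W w₂ w₁

/-- Comparability for the prefix preorder. -/
def PrefComparable {C : Type} (W : Set (ℕ → C)) (w₁ w₂ : List C) : Prop :=
  prefLe W w₁ w₂ ∨ prefLe W w₂ w₁

/-- The general reachability objective derived from `A`: infinite words with a prefix in `A`. -/
def ReachObj {C : Type} (A : Set (List C)) : Set (ℕ → C) :=
  {x | ∃ n : ℕ, (List.ofFn fun i : Fin n => x i) ∈ A}

/-- The general safety objective derived from `A`. -/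
def SafeObj {C : Type} (A : Set (List C)) : Set (ℕ → C) :=
  (ReachObj A)ᶜ

/-- The prefix preorder of `W` has finitely many equivalence classes. -/
def FinClasses {C : Type} (W : Set (ℕ → C)) : Prop :=
  (Set.range fun w : List C => contAfter W w).Finite

/-- The prefix preorder of `W` is well-founded:
every nonempty chain contains a minimal element. -/
def PrefWellFounded {C : Type} (W : Set (ℕ → C)) : Prop :=
  ∀ S : Set (List C), S.Nonempty →
    (∀ w₁ ∈ S, ∀ w₂ ∈ S, PrefComparable W w₁ w₂) →
    ∃ w₀ ∈ S, ∀ w ∈ S, ¬ prefLt W w w₀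

/-- Chromatic memory structure. -/
structure MemStruct (C : Type) where
  M : Type
  init : M
  upd : M → C → M

/-- Extension of the update function to finite words. -/
def MemStruct.updStar {C : Type} (N : MemStruct C) (m : N.M) (w : List C) : N.M :=
  w.foldl N.upd m

/-- The trivial one-state memory structure. -/
def trivMem (C : Type) : MemStruct C :=
  ⟨Unit, (), fun _ _ => ()⟩

/-- `W` is `N`-strongly-monotone. -/
def StronglyMonotone {C : Type} (N : MemStruct C) (W : Set (ℕ → C)) : Prop :=
  ∀ w₁ w₂ : List C,
    N.updStar N.init w₁ = N.updStar N.init w₂ → PrefComparable W w₁ w₂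

/-- `W` is `N`-progress-consistent. -/
def ProgressConsistent {C : Type} [Nonempty C] (N : MemStruct C) (W : Set (ℕ → C)) : Prop :=
  ∀ (m : N.M) (w₁ w₂ : List C),
    N.updStar N.init w₁ = m → N.updStar m w₂ = m →
    prefLt W w₁ (w₁ ++ w₂) → wcat w₁ (wpow w₂) ∈ W

/-- Two-player arena with colored edges; Player-1 vertices have outgoing edges
(so that strategies of Player 1 exist). -/
structure Arena (C : Type) where
  V : Type
  P1 : V → Prop
  E : Set (V × C × V)
  succ : ∀ v : V, P1 v → ∃ e ∈ E, e.1 = v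

namespace Arena

/-- Valid histories starting at a given vertex. -/
def HistFrom {C : Type} (A : Arena C) : A.V → List (A.V × C × A.V) → Prop
  | _, [] => True
  | v, e :: l => e ∈ A.E ∧ e.1 = v ∧ HistFrom A e.2.2 l

/-- Endpoint of a history. -/
def endFrom {C : Type} (A : Arena C) : A.V → List (A.V × C × A.V) → A.V
  | v, [] => v
  | _, e :: l => endFrom A e.2.2 l

/-- Infinite plays from a vertex. -/
def PlayFrom {C : Type} (A : Arena C) (v : A.V) (π : ℕ → A.V × C × A.V) : Prop :=
  (π 0).1 = v ∧ ∀ n : ℕ, π n ∈ A.E ∧ (π n).2.2 = (π (n + 1)).1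

/-- Colors along a play. -/
def playCol {C V : Type} (π : ℕ → V × C × V) : ℕ → C :=
  fun n => (π n).2.1

/-- Strategies of Player 1: on every valid history ending in a Player-1 vertex,
the strategy picks an edge leaving that vertex. -/
structure Strategy {C : Type} (A : Arena C) where
  next : A.V → List (A.V × C × A.V) → A.V × C × A.V
  legal : ∀ (v : A.V) (l : List (A.V × C × A.V)),
    A.HistFrom v l → A.P1 (A.endFrom v l) →
      next v l ∈ A.E ∧ (next v l).1 = A.endFrom v l

/-- A play from `v` is consistent with the strategy `σ`. -/
def Strategy.Consistent {C : Type} {A : Arena C} (σ : A.Strategy) (v : A.V)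
    (π : ℕ → A.V × C × A.V) : Prop :=
  ∀ n : ℕ, A.P1 (A.endFrom v (List.ofFn fun i : Fin n => π i)) →
    π n = σ.next v (List.ofFn fun i : Fin n => π i)

/-- `σ` is winning from `v` for the objective `W`. -/
def Strategy.WinningFrom {C : Type} {A : Arena C} (σ : A.Strategy)
    (W : Set (ℕ → C)) (v : A.V) : Prop :=
  ∀ π : ℕ → A.V × C × A.V, A.PlayFrom v π → σ.Consistent v π → playCol π ∈ W

/-- `σ` is optimal in `(A, W)`: winning from every vertex from which
Player 1 has some winning strategy. -/
def Strategy.Optimal {C : Type} {A : Arena C} (σ : A.Strategy) (W : Set (ℕ → C)) : Prop :=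
  ∀ v : A.V, (∃ σ' : A.Strategy, σ'.WinningFrom W v) → σ.WinningFrom W v

/-- `σ` is based on the memory structure `N`. -/
def Strategy.BasedOn {C : Type} {A : Arena C} (σ : A.Strategy) (N : MemStruct C) : Prop :=
  ∃ nxt : A.V → N.M → A.V × C × A.V,
    ∀ (v : A.V) (l : List (A.V × C × A.V)),
      A.HistFrom v l → A.P1 (A.endFrom v l) →
        σ.next v l = nxt (A.endFrom v l) (N.updStar N.init (l.map fun e => e.2.1))

/-- Finite arena: finitely many vertices and edges. -/
def IsFinite {C : Type} (A : Arena C) : Prop := Finite A.V ∧ A.E.Finite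

/-- Finitely branching arena. -/
def FinBranching {C : Type} (A : Arena C) : Prop :=
  ∀ v : A.V, {e ∈ A.E | e.1 = v}.Finite

/-- One-player arena of Player 1. -/
def OneP1 {C : Type} (A : Arena C) : Prop := ∀ v : A.V, A.P1 v

end Arena

/-- `N` suffices to play optimally for `W` in all arenas of the class `P`. -/
def SufficesIn {C : Type} (N : MemStruct C) (W : Set (ℕ → C))
    (P : Arena C → Prop) : Prop :=
  ∀ A : Arena C, P A → ∃ σ : A.Strategy, σ.BasedOn N ∧ σ.Optimal W

/-- Deterministic automaton (with complete transition function). -/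
structure DetAuto (C : Type) where
  Q : Type
  init : Q
  δ : Q → C → Q
  F : Set Q

/-- Extension of the transition function to finite words. -/
def DetAuto.δStar {C : Type} (D : DetAuto C) (q : D.Q) (w : List C) : D.Q :=
  w.foldl D.δ q

/-- Language recognized by `D`. -/
def DetAuto.lang {C : Type} (D : DetAuto C) : Set (List C) :=
  {w | D.δStar D.init w ∈ D.F}

/-- Prefix preorder extended to automaton states. -/
def statePrefLe {C : Type} (D : DetAuto C) (W : Set (ℕ → C)) (q₁ q₂ : D.Q) : Prop :=
  ∀ w₁ w₂ : List C,
    D.δStar D.init w₁ = q₁ → D.δStar D.init w₂ = q₂ → prefLe W w₁ w₂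

def statePrefLt {C : Type} (D : DetAuto C) (W : Set (ℕ → C)) (q₁ q₂ : D.Q) : Prop :=
  statePrefLe D W q₁ q₂ ∧ ¬ statePrefLe D W q₂ q₁

def StateComparable {C : Type} (D : DetAuto C) (W : Set (ℕ → C)) (q₁ q₂ : D.Q) : Prop :=
  statePrefLe D W q₁ q₂ ∨ statePrefLe D W q₂ q₁

/-- Monotone decomposition of `D` with `k` sets. -/
def MonotoneDecomposition {C : Type} (D : DetAuto C) (W : Set (ℕ → C))
    {k : ℕ} (Γ : Fin k → Set D.Q) : Prop :=
  (∀ q : D.Q, ∃ i : Fin k, q ∈ Γ i) ∧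
  (∀ (c : C) (i : Fin k), ∃ j : Fin k, (fun q => D.δ q c) '' Γ i ⊆ Γ j) ∧
  (∀ i : Fin k, ∀ q₁ ∈ Γ i, ∀ q₂ ∈ Γ i, StateComparable D W q₁ q₂)

end RegularMemory

/-!
Suppose `w₁` and `w₁w₂` both lead `M` to the state `m` and `w₁ ≺_W w₁w₂`, and pick `x` with
`w₁w₂x ∈ W` but `w₁x ∉ W`. In the one-player arena consisting of a lasso that reads `w₁` and then
loops on `w₂`, with a shortcut out of the loop entry into a ray reading `x`, Player 1 wins by going
around the loop once and then leaving. A strategy based on `M` is in state `m` at every visit of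
the loop entry, so it makes the same choice there every time: leaving at once yields `w₁x ∉ W`,
so an optimal one never leaves, and the resulting play `w₁(w₂)^ω` must be winning.
-/

namespace RegularMemory

section LassoPos

/-- Position on the lasso `0 → ⋯ → n₁ → ⋯ → n₁ + n₂ - 1 → n₁` after `n` steps. -/
def lassoPos (n₁ n₂ n : ℕ) : ℕ := if n < n₁ then n else n₁ + (n - n₁) % n₂

variable {n₁ n₂ : ℕ}

theorem lassoPos_zero : lassoPos n₁ n₂ 0 = 0 := by
  unfold lassoPos
  split_ifs <;> simp_all

theorem lassoPos_lassoPos_add_one (n : ℕ) :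
    lassoPos n₁ n₂ (lassoPos n₁ n₂ n + 1) = lassoPos n₁ n₂ (n + 1) := by
  unfold lassoPos
  split_ifs <;> try omega
  rw [show n₁ + (n - n₁) % n₂ + 1 - n₁ = (n - n₁) % n₂ + 1 by omega, Nat.mod_add_mod,
    show n + 1 - n₁ = n - n₁ + 1 by omega]

theorem lassoPos_self : lassoPos n₁ n₂ n₁ = n₁ := by
  simp [lassoPos]

theorem lassoPos_add_mul (k : ℕ) : lassoPos n₁ n₂ (n₁ + n₂ * k) = n₁ := by
  simp [lassoPos]

theorem exists_eq_add_mul_of_lassoPos_eq {n : ℕ} (h : lassoPos n₁ n₂ n = n₁) :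
    ∃ k, n = n₁ + n₂ * k := by
  unfold lassoPos at h
  split_ifs at h with hn
  · omega
  · obtain ⟨k, hk⟩ := Nat.dvd_of_mod_eq_zero (show (n - n₁) % n₂ = 0 by omega)
    exact ⟨k, by omega⟩

end LassoPos

section Words

variable {C : Type}

theorem ofFn_wcat_add (w : List C) (x : ℕ → C) (n : ℕ) :
    (List.ofFn fun i : Fin (w.length + n) => wcat w x i) = w ++ List.ofFn fun i : Fin n => x i := by
  rw [List.ofFn_add]
  simp [wcat]

theorem ofFn_wcat_length (w : List C) (x : ℕ → C) :
    (List.ofFn fun i : Fin w.length => wcat w x i) = w := by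
  simpa using ofFn_wcat_add w x 0

theorem wcat_ofFn (f x : ℕ → C) (s n : ℕ) :
    wcat (List.ofFn fun i : Fin s => f i) x n = if n < s then f n else x (n - s) := by
  simp only [wcat, List.length_ofFn, List.get_eq_getElem, List.getElem_ofFn, dite_eq_ite]

theorem wpow_mod [Nonempty C] (w : List C) (n : ℕ) : wpow w (n % w.length) = wpow w n := by
  cases w with
  | nil => rfl
  | cons a l => simp only [wpow, Nat.mod_mod]

theorem wpow_eq_wcat [Nonempty C] {w : List C} (hw : w ≠ []) : wpow w = wcat w (wpow w) := by
  funext n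
  rcases lt_or_ge n w.length with h | h
  · rw [wcat, dif_pos h]
    cases w with
    | nil => exact absurd rfl hw
    | cons a l => simp only [wpow, Nat.mod_eq_of_lt h]
  · obtain ⟨k, rfl⟩ := Nat.exists_eq_add_of_le h
    rw [wcat, dif_neg (by omega), Nat.add_sub_cancel_left, ← wpow_mod, Nat.add_mod_left, wpow_mod]

theorem ofFn_wpow_mul [Nonempty C] {w : List C} (hw : w ≠ []) (k : ℕ) :
    (List.ofFn fun i : Fin (w.length * k) => wpow w i) = (List.replicate k w).flatten := by
  induction k with
  | zero => rfl
  | succ k ih =>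
    rw [List.replicate_succ, List.flatten_cons, ← ih, ← ofFn_wcat_add, ← wpow_eq_wcat hw,
      Nat.mul_succ, Nat.add_comm]

theorem ofFn_wcat_wpow [Nonempty C] (w₁ : List C) {w₂ : List C} (hw₂ : w₂ ≠ []) (k : ℕ) :
    (List.ofFn fun i : Fin (w₁.length + w₂.length * k) => wcat w₁ (wpow w₂) i) =
      w₁ ++ (List.replicate k w₂).flatten := by
  rw [ofFn_wcat_add, ofFn_wpow_mul hw₂]

theorem wcat_wpow_lassoPos [Nonempty C] (w₁ w₂ : List C) (n : ℕ) :
    wcat w₁ (wpow w₂) (lassoPos w₁.length w₂.length n) = wcat w₁ (wpow w₂) n := by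
  unfold lassoPos
  split_ifs with h
  · rfl
  · rw [wcat, dif_neg (by omega), wcat, dif_neg h, Nat.add_sub_cancel_left, wpow_mod]

theorem ne_nil_of_prefLt_append {W : Set (ℕ → C)} {w₁ w₂ : List C}
    (h : prefLt W w₁ (w₁ ++ w₂)) : w₂ ≠ [] := by
  rintro rfl
  exact h.2 (by simpa using h.1)

end Words

namespace MemStruct

variable {C : Type} (N : MemStruct C)

theorem updStar_append (m : N.M) (u v : List C) :
    N.updStar m (u ++ v) = N.updStar (N.updStar m u) v :=
  List.foldl_append ..

theorem updStar_flatten_replicate {m : N.M} {w : List C} (hm : N.updStar m w = m) (k : ℕ) :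
    N.updStar m (List.replicate k w).flatten = m := by
  induction k with
  | zero => rfl
  | succ k ih => rw [List.replicate_succ, List.flatten_cons, updStar_append, hm, ih]

theorem updStar_ofFn_wcat_wpow [Nonempty C] {m : N.M} {w₁ w₂ : List C} (hw₂ : w₂ ≠ [])
    (hm₁ : N.updStar N.init w₁ = m) (hm₂ : N.updStar m w₂ = m) (k : ℕ) :
    N.updStar N.init
      (List.ofFn fun i : Fin (w₁.length + w₂.length * k) => wcat w₁ (wpow w₂) i) = m := by
  rw [ofFn_wcat_wpow w₁ hw₂, updStar_append, hm₁, updStar_flatten_replicate N hm₂]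

end MemStruct

namespace Arena

variable {C : Type} {A : Arena C}

theorem endFrom_append_singleton (e : A.V × C × A.V) :
    ∀ (v : A.V) (l : List (A.V × C × A.V)), A.endFrom v (l ++ [e]) = e.2.2
  | _, [] => rfl
  | _, f :: l => endFrom_append_singleton e f.2.2 l

theorem HistFrom.append_singleton {e : A.V × C × A.V} (he : e ∈ A.E) :
    ∀ {v : A.V} {l : List (A.V × C × A.V)}, A.HistFrom v l → e.1 = A.endFrom v l →
      A.HistFrom v (l ++ [e])
  | _, [], _, hsrc => ⟨he, hsrc, trivial⟩
  | _, _ :: _, hl, hsrc => ⟨hl.1, hl.2.1, HistFrom.append_singleton he hl.2.2 hsrc⟩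

theorem PlayFrom.endFrom_ofFn {v : A.V} {π : ℕ → A.V × C × A.V} (hπ : A.PlayFrom v π) :
    ∀ n, A.endFrom v (List.ofFn fun i : Fin n => π i) = (π n).1
  | 0 => hπ.1.symm
  | n + 1 => by
    rw [List.ofFn_succ_last, endFrom_append_singleton]
    exact (hπ.2 n).2

theorem PlayFrom.histFrom_ofFn {v : A.V} {π : ℕ → A.V × C × A.V} (hπ : A.PlayFrom v π) :
    ∀ n, A.HistFrom v (List.ofFn fun i : Fin n => π i)
  | 0 => trivial
  | n + 1 => by
    rw [List.ofFn_succ_last]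
    exact (hπ.histFrom_ofFn n).append_singleton (hπ.2 n).1 (hπ.endFrom_ofFn n).symm

def pathOf {V : Type} (ρ : ℕ → V) (c : ℕ → C) : ℕ → V × C × V :=
  fun n => (ρ n, c n, ρ (n + 1))

theorem playFrom_pathOf {ρ : ℕ → A.V} {c : ℕ → C} (h : ∀ n, pathOf ρ c n ∈ A.E) :
    A.PlayFrom (ρ 0) (pathOf ρ c) :=
  ⟨rfl, fun n => ⟨h n, rfl⟩⟩

namespace Strategy

variable {v : A.V} {π : ℕ → A.V × C × A.V}

theorem next_ofFn_mem (σ : A.Strategy) (hone : A.OneP1) (hπ : A.PlayFrom v π) (n : ℕ) :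
    σ.next v (List.ofFn fun i : Fin n => π i) ∈ A.E ∧
      (σ.next v (List.ofFn fun i : Fin n => π i)).1 = (π n).1 := by
  rw [← hπ.endFrom_ofFn n]
  exact σ.legal v _ (hπ.histFrom_ofFn n) (hone _)

theorem next_ofFn_of_basedOn {σ : A.Strategy} {N : MemStruct C} {nxt : A.V → N.M → A.V × C × A.V}
    (hnxt : ∀ (v : A.V) (l : List (A.V × C × A.V)), A.HistFrom v l → A.P1 (A.endFrom v l) →
      σ.next v l = nxt (A.endFrom v l) (N.updStar N.init (l.map fun e => e.2.1)))
    (hone : A.OneP1) (hπ : A.PlayFrom v π) (n : ℕ) :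
    σ.next v (List.ofFn fun i : Fin n => π i) =
      nxt (π n).1 (N.updStar N.init (List.ofFn fun i : Fin n => playCol π i)) := by
  rw [hnxt v _ (hπ.histFrom_ofFn n) (hone _), hπ.endFrom_ofFn, List.map_ofFn]
  rfl

noncomputable def follow (hπ : A.PlayFrom v π) : A.Strategy where
  next u l :=
    open Classical in
    if u = v ∧ l = List.ofFn (fun i : Fin l.length => π i) then π l.length
    else if h : A.P1 (A.endFrom u l) then Classical.choose (A.succ _ h) else π 0
  legal u l _ hP := by
    split_ifs with h
    · obtain ⟨rfl, hl⟩ := h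
      generalize l.length = n at hl ⊢
      subst hl
      exact ⟨(hπ.2 n).1, (hπ.endFrom_ofFn n).symm⟩
    · exact Classical.choose_spec (A.succ _ hP)

theorem eq_of_consistent_follow (hone : A.OneP1) (hπ : A.PlayFrom v π)
    {π' : ℕ → A.V × C × A.V} (h : (follow hπ).Consistent v π') : π' = π := by
  funext n
  induction n using Nat.strong_induction_on with
  | _ n ih =>
    have hpre : (List.ofFn fun i : Fin n => π' i) = List.ofFn fun i : Fin n => π i :=
      congrArg List.ofFn (funext fun i => ih i i.isLt)
    rw [h n (hone _), hpre]
    simp [follow]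

theorem exists_winningFrom_of_play {W : Set (ℕ → C)} (hone : A.OneP1) (hπ : A.PlayFrom v π)
    (hW : playCol π ∈ W) : ∃ σ : A.Strategy, σ.WinningFrom W v :=
  ⟨follow hπ, fun _ _ h => eq_of_consistent_follow hone hπ h ▸ hW⟩

end Strategy

/-- The one-player arena in which every vertex `v` has the edge `(v, next v)`, plus the edge
`shortcut`. -/
abbrev ofNext {V : Type} (next : V → C × V) (shortcut : V × C × V) : Arena C where
  V := V
  P1 _ := True
  E := {e | e.2 = next e.1} ∪ {shortcut}
  succ v _ := ⟨(v, next v), Or.inl rfl, rfl⟩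

section OfNext

variable {V : Type} {next : V → C × V} {shortcut : V × C × V}

theorem oneP1_ofNext : (ofNext next shortcut).OneP1 := fun _ => trivial

theorem finBranching_ofNext : (ofNext next shortcut).FinBranching := fun v =>
  ((Set.finite_singleton shortcut).insert (v, next v)).subset <| by
    rintro e ⟨he | he, hsrc⟩
    · exact Or.inl (Prod.ext hsrc (hsrc ▸ he))
    · exact Or.inr he

theorem consistent_ofNext {σ : (ofNext next shortcut).Strategy} {v : V}
    {π : ℕ → V × C × V} (hπ : (ofNext next shortcut).PlayFrom v π)
    (h : ∀ n, (π n).1 = shortcut.1 →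
      (σ.next v (List.ofFn fun i : Fin n => π i) = shortcut ↔ π n = shortcut)) :
    σ.Consistent v π := by
  intro n _
  obtain ⟨hmem, hsrc⟩ := σ.next_ofFn_mem oneP1_ofNext hπ n
  by_cases hs : π n = shortcut
  · rw [hs, (h n (by rw [hs])).2 hs]
  have hσs : σ.next v (List.ofFn fun i : Fin n => π i) ≠ shortcut := fun h' =>
    hs ((h n (by rw [← hsrc, h'])).1 h')
  have hdet {e : V × C × V} (he : e ∈ (ofNext next shortcut).E) (hne : e ≠ shortcut) :
      e = (e.1, next e.1) := by
    rcases he with he | he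
    · exact Prod.ext rfl he
    · exact absurd he hne
  calc π n = ((π n).1, next (π n).1) := hdet (hπ.2 n).1 hs
    _ = _ := by rw [← hsrc]; exact (hdet hmem hσs).symm

end OfNext

end Arena

section Lasso

variable {C : Type} {n₁ n₂ : ℕ}

/-- The lasso with stem colors `y 0, …, y (n₁ - 1)` and loop colors `y n₁, …, y (n₁ + n₂ - 1)`
(vertices `Sum.inl i`), and a shortcut from `Sum.inl n₁` into the ray `Sum.inr 1 → Sum.inr 2 → ⋯`
reading `x 0, x 1, …`. -/
abbrev lasso (n₁ n₂ : ℕ) (y x : ℕ → C) : Arena C :=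
  Arena.ofNext (V := ℕ ⊕ ℕ)
    (Sum.elim (fun i => (y i, .inl (lassoPos n₁ n₂ (i + 1)))) fun k => (x k, .inr (k + 1)))
    (.inl n₁, x 0, .inr 1)

def lassoPath (n₁ n₂ : ℕ) (y : ℕ → C) : ℕ → (ℕ ⊕ ℕ) × C × (ℕ ⊕ ℕ) :=
  Arena.pathOf (fun n => .inl (lassoPos n₁ n₂ n)) y

/-- Going around the lasso for `s` steps, then taking the shortcut. -/
def exitPath (n₁ n₂ s : ℕ) (y x : ℕ → C) : ℕ → (ℕ ⊕ ℕ) × C × (ℕ ⊕ ℕ) :=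
  Arena.pathOf (fun n => if n ≤ s then .inl (lassoPos n₁ n₂ n) else .inr (n - s))
    (wcat (List.ofFn fun i : Fin s => y i) x)

variable {y x : ℕ → C}

theorem lassoPath_playFrom (hy : ∀ n, y (lassoPos n₁ n₂ n) = y n) :
    (lasso n₁ n₂ y x).PlayFrom (.inl 0) (lassoPath n₁ n₂ y) := by
  have := Arena.playFrom_pathOf (A := lasso n₁ n₂ y x) (ρ := fun n => .inl (lassoPos n₁ n₂ n))
    (c := y) fun n => Or.inl <| show (y n, _) = (y _, _) by
      rw [hy, lassoPos_lassoPos_add_one]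
  rwa [lassoPos_zero] at this

theorem exitPath_playFrom (hy : ∀ n, y (lassoPos n₁ n₂ n) = y n) {s : ℕ}
    (hs : lassoPos n₁ n₂ s = n₁) :
    (lasso n₁ n₂ y x).PlayFrom (.inl 0) (exitPath n₁ n₂ s y x) := by
  have := Arena.playFrom_pathOf (A := lasso n₁ n₂ y x)
    (ρ := fun n => if n ≤ s then .inl (lassoPos n₁ n₂ n) else .inr (n - s))
    (c := wcat (List.ofFn fun i : Fin s => y i) x) fun n => by
      have hc := wcat_ofFn y x s n
      unfold Arena.pathOf
      beta_reduce
      rcases lt_trichotomy n s with h | rfl | h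
      · rw [if_pos h.le, if_pos (Nat.succ_le_of_lt h), hc, if_pos h]
        exact Or.inl <| show (y n, _) = (y _, _) by rw [hy, lassoPos_lassoPos_add_one]
      · rw [if_pos le_rfl, if_neg (by omega), hc, if_neg (lt_irrefl _), hs, Nat.sub_self,
          Nat.add_sub_cancel_left]
        exact Or.inr rfl
      · rw [if_neg (by omega), if_neg (by omega), hc, if_neg (by omega),
          show n + 1 - s = n - s + 1 by omega]
        exact Or.inl rfl
  simp only [Nat.zero_le, if_true, lassoPos_zero] at this
  exact this

theorem lassoPath_fst (n : ℕ) : (lassoPath n₁ n₂ y n).1 = .inl (lassoPos n₁ n₂ n) := rfl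

theorem playCol_lassoPath : Arena.playCol (lassoPath n₁ n₂ y) = y := rfl

theorem playCol_exitPath (s : ℕ) :
    Arena.playCol (exitPath n₁ n₂ s y x) = wcat (List.ofFn fun i : Fin s => y i) x := rfl

theorem exitPath_self {s : ℕ} (hs : lassoPos n₁ n₂ s = n₁) :
    exitPath n₁ n₂ s y x s = (.inl n₁, x 0, .inr 1) := by
  simp [exitPath, Arena.pathOf, hs, wcat_ofFn]

theorem ofFn_playCol_exitPath (s : ℕ) :
    (List.ofFn fun i : Fin s => Arena.playCol (exitPath n₁ n₂ s y x) i) =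
      List.ofFn fun i : Fin s => y i :=
  congrArg List.ofFn <| funext fun i => by
    simp [Arena.playCol, exitPath, Arena.pathOf, wcat_ofFn]

theorem lassoPath_consistent (hy : ∀ n, y (lassoPos n₁ n₂ n) = y n)
    {σ : (lasso n₁ n₂ y x).Strategy}
    (h : ∀ k, σ.next (.inl 0) (List.ofFn fun i : Fin (n₁ + n₂ * k) => lassoPath n₁ n₂ y i) ≠
      (.inl n₁, x 0, .inr 1)) :
    σ.Consistent (.inl 0) (lassoPath n₁ n₂ y) :=
  Arena.consistent_ofNext (lassoPath_playFrom hy) fun n hn => by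
    obtain ⟨k, rfl⟩ := exists_eq_add_mul_of_lassoPos_eq (Sum.inl_injective hn)
    exact iff_of_false (h k) fun h' => Sum.inl_ne_inr (congrArg (·.2.2) h')

theorem exitPath_consistent (hy : ∀ n, y (lassoPos n₁ n₂ n) = y n)
    {σ : (lasso n₁ n₂ y x).Strategy}
    (h : σ.next (.inl 0) (List.ofFn fun i : Fin n₁ => exitPath n₁ n₂ n₁ y x i) =
      (.inl n₁, x 0, .inr 1)) :
    σ.Consistent (.inl 0) (exitPath n₁ n₂ n₁ y x) :=
  Arena.consistent_ofNext (exitPath_playFrom hy lassoPos_self) fun n hn => by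
    have hn₁ : n = n₁ := by
      change (if n ≤ n₁ then _ else _) = _ at hn
      split_ifs at hn
      obtain ⟨k, rfl⟩ := exists_eq_add_mul_of_lassoPos_eq (Sum.inl_injective hn)
      omega
    subst hn₁
    exact iff_of_true h (exitPath_self lassoPos_self)

end Lasso

/-- for any objective `W`, if the memory structure `N` suffices to play
optimally for `W` in all finitely branching one-player arenas of Player 1, then `W`
is `N`-progress-consistent. -/
theorem progressConsistency_necessary_general {C : Type} [Nonempty C]
    (W : Set (ℕ → C)) (N : MemStruct C)
    (hsuff : SufficesIn N W (fun A => A.FinBranching ∧ A.OneP1)) :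
    ProgressConsistent N W := by
  intro m w₁ w₂ hm₁ hm₂ hlt
  have hw₂ := ne_nil_of_prefLt_append hlt
  obtain ⟨x, hx₂, hx₁⟩ := Set.not_subset.mp hlt.2
  set y := wcat w₁ (wpow w₂)
  have hy := wcat_wpow_lassoPos w₁ w₂
  obtain ⟨σ, ⟨nxt, hnxt⟩, hopt⟩ := hsuff (lasso w₁.length w₂.length y x)
    ⟨Arena.finBranching_ofNext, Arena.oneP1_ofNext⟩
  have hwin : σ.WinningFrom W (.inl 0) := hopt _ <|
    Arena.Strategy.exists_winningFrom_of_play Arena.oneP1_ofNext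
      (exitPath_playFrom hy (lassoPos_add_mul 1)) (by
        rw [playCol_exitPath, ofFn_wcat_wpow w₁ hw₂ 1]
        simpa [contAfter] using hx₂)
  by_cases hexit : nxt (.inl w₁.length) m = (.inl w₁.length, x 0, .inr 1)
  · refine (hx₁ ?_).elim
    have := hwin _ (exitPath_playFrom hy lassoPos_self) <| exitPath_consistent hy <| by
      rw [Arena.Strategy.next_ofFn_of_basedOn hnxt Arena.oneP1_ofNext
          (exitPath_playFrom hy lassoPos_self), exitPath_self lassoPos_self,
        ofFn_playCol_exitPath, ofFn_wcat_length, hm₁, hexit]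
    rwa [playCol_exitPath, ofFn_wcat_length] at this
  · exact hwin _ (lassoPath_playFrom hy) <| lassoPath_consistent hy fun k => by
      rw [Arena.Strategy.next_ofFn_of_basedOn hnxt Arena.oneP1_ofNext (lassoPath_playFrom hy),
        lassoPath_fst, lassoPos_add_mul, playCol_lassoPath,
        N.updStar_ofFn_wcat_wpow hw₂ hm₁ hm₂]
      exact hexit

end RegularMemory
end

section
/- Every general safety objective W ⊆ C^ω is M_triv-progress-consistent: for all finite words w₁, w₂ ∈ C^*, if w₁ ≺_W w₁w₂ then w₁(w₂)^ω ∈ W. -/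
set_option autoImplicit false

namespace RegularMemory

open Set

section Words

variable {C : Type}

lemma wcat_append (u v : List C) (x : ℕ → C) :
    wcat (u ++ v) x = wcat u (wcat v x) := by
  funext n
  simp only [wcat, List.length_append, List.get_eq_getElem]
  by_cases h1 : n < u.length
  · rw [dif_pos (by omega), dif_pos h1, List.getElem_append_left h1]
  · rw [dif_neg h1]
    by_cases h2 : n < u.length + v.length
    · rw [dif_pos h2, dif_pos (by omega), List.getElem_append_right (by omega)]
    · rw [dif_neg h2, dif_neg (by omega), Nat.sub_sub]

lemma wcat_eqOn_Iio (w : List C) {x y : ℕ → C} {n : ℕ} (h : EqOn x y (Iio n)) :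
    EqOn (wcat w x) (wcat w y) (Iio (w.length + n)) := by
  intro i hi
  simp only [wcat]
  split_ifs
  · rfl
  · exact h (show i - w.length < n by simp only [mem_Iio] at hi; omega)

lemma iterate_wcat_eqOn_Iio (w : List C) (x y : ℕ → C) :
    ∀ k : ℕ, EqOn ((wcat w)^[k] x) ((wcat w)^[k] y) (Iio (k * w.length))
  | 0 => by simp
  | k + 1 => by
    rw [Function.iterate_succ_apply', Function.iterate_succ_apply', Nat.succ_mul,
      Nat.add_comm]
    exact wcat_eqOn_Iio w (iterate_wcat_eqOn_Iio w x y k)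

lemma wcat_wpow [Nonempty C] {w : List C} (hw : w ≠ []) : wcat w (wpow w) = wpow w := by
  obtain ⟨a, l, rfl⟩ := List.exists_cons_of_ne_nil hw
  funext n
  simp only [wcat, wpow, List.get_eq_getElem]
  split_ifs with h
  · simp only [Nat.mod_eq_of_lt h]
  · simp only [Nat.mod_eq_sub_mod (Nat.le_of_not_lt h)]

end Words

section PrefixPreorder

variable {C : Type} (W : Set (ℕ → C))

lemma contAfter_append (u v : List C) : contAfter W (u ++ v) = wcat v ⁻¹' contAfter W u := by
  ext x
  show wcat (u ++ v) x ∈ W ↔ wcat u (wcat v x) ∈ W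
  rw [wcat_append]

lemma prefLe_append_iff_mapsTo (u v : List C) :
    prefLe W u (u ++ v) ↔ MapsTo (wcat v) (contAfter W u) (contAfter W u) := by
  rw [prefLe, contAfter_append, mapsTo_iff_subset_preimage]

variable {W}

lemma nonempty_contAfter_of_prefLt {u v : List C} (h : prefLt W u v) :
    (contAfter W v).Nonempty := by
  rw [nonempty_iff_ne_empty]
  intro hv
  exact h.2 (by rw [prefLe, hv]; exact empty_subset _)

end PrefixPreorder

lemma mem_safeObj_of_forall_eqOn_Iio {C : Type} {A : Set (List C)} {y : ℕ → C}
    (h : ∀ n, ∃ z ∈ SafeObj A, EqOn z y (Iio n)) : y ∈ SafeObj A := by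
  rintro ⟨n, hn⟩
  obtain ⟨z, hz, hzy⟩ := h n
  refine hz ⟨n, ?_⟩
  convert hn using 2
  funext i
  exact hzy i.2

/-- Strictness makes `S = w₁⁻¹W` nonempty, and `w₁ ⪯ w₁w₂` makes it invariant under `x ↦ w₂x`.
Iterating from any `y ∈ S` gives words `w₂ᵏy ∈ S` converging to the fixed point `w₂^ω`,
and `S` is closed because `W` is a safety objective. -/
theorem safety_trivial_progressConsistent {C : Type} [Nonempty C]
    (W : Set (ℕ → C))
    (hsafe : ∃ A : Set (List C), W = SafeObj A) :
    ∀ w₁ w₂ : List C, prefLt W w₁ (w₁ ++ w₂) → wcat w₁ (wpow w₂) ∈ W := by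
  obtain ⟨A, rfl⟩ := hsafe
  intro w₁ w₂ hlt
  have hw₂ : w₂ ≠ [] := by
    rintro rfl
    exact hlt.2 (by rw [List.append_nil]; exact subset_rfl)
  have hmaps := (prefLe_append_iff_mapsTo _ w₁ w₂).1 hlt.1
  obtain ⟨x, hx⟩ := nonempty_contAfter_of_prefLt hlt
  rw [contAfter_append] at hx
  refine mem_safeObj_of_forall_eqOn_Iio fun n => ⟨_, hmaps.iterate n hx, ?_⟩
  have hagree := wcat_eqOn_Iio w₁ (iterate_wcat_eqOn_Iio w₂ (wcat w₂ x) (wpow w₂) n)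
  rw [Function.iterate_fixed (wcat_wpow hw₂)] at hagree
  refine hagree.mono (Iio_subset_Iio ?_)
  have := List.length_pos_iff.2 hw₂
  nlinarith
end RegularMemory
end

section
/- Let D = (Q, C, q_init, δ, F) be a deterministic automaton with a single final state q_fin that is absorbing, in which every state is reachable from q_init, and let W = Safe(L(D)) or W = Reach(L(D)). Then D admits a monotone decomposition with k sets if and only if there exists a chromatic memory structure M with k states such that W is M-strongly-monotone. -/
set_option autoImplicit false

/-!
Because the only final state is absorbing, the residual `w⁻¹W` of a reachability or safety
objective depends only on the state `δ*(q_init, w)`. Hence a memory may simply record the index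
of a chain `Γᵢ` containing the current state, and conversely the states reached by the words
leading a strongly-monotone memory to the same memory state form a chain; a letter maps
each such chain into another because the memory update is deterministic.
-/

namespace RegularMemory

section Words

variable {C : Type}

lemma ofFn_prefix_ofFn_of_le (x : ℕ → C) {n n' : ℕ} (h : n ≤ n') :
    (List.ofFn fun i : Fin n => x i) <+: List.ofFn fun i : Fin n' => x i := by
  obtain ⟨d, rfl⟩ := Nat.exists_eq_add_of_le h
  rw [List.ofFn_add]
  exact List.prefix_append _ _

lemma ofFn_wcat_length_add (w : List C) (x : ℕ → C) (m : ℕ) :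
    (List.ofFn fun i : Fin (w.length + m) => wcat w x i) =
      w ++ List.ofFn fun i : Fin m => x i := by
  rw [List.ofFn_add]
  congr 1
  · apply List.ext_get (by simp)
    intro n h _
    simp [wcat, Fin.castLE]
  · simp [wcat]

lemma contAfter_compl (W : Set (ℕ → C)) (w : List C) :
    contAfter Wᶜ w = (contAfter W w)ᶜ :=
  rfl

lemma mem_contAfter_reachObj_iff {A : Set (List C)} (hA : ∀ u ∈ A, ∀ v, u ++ v ∈ A)
    (w : List C) (x : ℕ → C) :
    x ∈ contAfter (ReachObj A) w ↔ ∃ m : ℕ, (w ++ List.ofFn fun i : Fin m => x i) ∈ A := by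
  constructor
  · rintro ⟨n, hn⟩
    obtain ⟨v, hv⟩ := ofFn_prefix_ofFn_of_le (wcat w x) (Nat.le_add_left n w.length)
    refine ⟨n, ?_⟩
    rw [← ofFn_wcat_length_add, ← hv]
    exact hA _ hn v
  · rintro ⟨m, hm⟩
    exact ⟨w.length + m, by rwa [ofFn_wcat_length_add]⟩

end Words

section Automata

variable {C : Type} (D : DetAuto C)

lemma DetAuto.δStar_append (q : D.Q) (u v : List C) :
    D.δStar q (u ++ v) = D.δStar (D.δStar q u) v :=
  List.foldl_append

lemma MemStruct.updStar_append_s13 (N : MemStruct C) (m : N.M) (u v : List C) :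
    N.updStar m (u ++ v) = N.updStar (N.updStar m u) v :=
  List.foldl_append

variable {D}

lemma DetAuto.δStar_mem_of_closed (hF : ∀ q ∈ D.F, ∀ c, D.δ q c ∈ D.F) :
    ∀ (u : List C) {q : D.Q}, q ∈ D.F → D.δStar q u ∈ D.F
  | [], _, hq => hq
  | c :: u, _, hq => DetAuto.δStar_mem_of_closed hF u (hF _ hq c)

lemma DetAuto.append_mem_lang (hF : ∀ q ∈ D.F, ∀ c, D.δ q c ∈ D.F) {u : List C}
    (hu : u ∈ D.lang) (v : List C) : u ++ v ∈ D.lang := by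
  change D.δStar D.init (u ++ v) ∈ D.F
  rw [D.δStar_append]
  exact DetAuto.δStar_mem_of_closed hF v hu

variable (D) in
/-- The residual `w⁻¹W` depends only on the state reached by `w`, so that `q⁻¹W` is
well defined. -/
def StateDeterminesCont (W : Set (ℕ → C)) : Prop :=
  ∀ w₁ w₂ : List C, D.δStar D.init w₁ = D.δStar D.init w₂ → contAfter W w₁ = contAfter W w₂

lemma stateDeterminesCont_reachObj_lang (hF : ∀ q ∈ D.F, ∀ c, D.δ q c ∈ D.F) :
    StateDeterminesCont D (ReachObj D.lang) := by
  intro w₁ w₂ h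
  ext x
  simp only [mem_contAfter_reachObj_iff (fun _ hu => D.append_mem_lang hF hu)]
  change (∃ m, D.δStar D.init (w₁ ++ _) ∈ D.F) ↔ ∃ m, D.δStar D.init (w₂ ++ _) ∈ D.F
  simp only [D.δStar_append, h]

lemma StateDeterminesCont.compl {W : Set (ℕ → C)} (hW : StateDeterminesCont D W) :
    StateDeterminesCont D Wᶜ := by
  intro w₁ w₂ h
  rw [contAfter_compl, contAfter_compl, hW w₁ w₂ h]

lemma StateDeterminesCont.stateComparable {W : Set (ℕ → C)} (hW : StateDeterminesCont D W)
    {w₁ w₂ : List C} (h : PrefComparable W w₁ w₂) :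
    StateComparable D W (D.δStar D.init w₁) (D.δStar D.init w₂) := by
  have lift : ∀ {u₁ u₂ : List C}, prefLe W u₁ u₂ →
      statePrefLe D W (D.δStar D.init u₁) (D.δStar D.init u₂) := by
    intro u₁ u₂ hle v₁ v₂ h₁ h₂
    rw [prefLe, hW v₁ u₁ h₁, hW v₂ u₂ h₂]
    exact hle
  exact h.imp lift lift

end Automata

section Decomposition

variable {C : Type} {D : DetAuto C} {W : Set (ℕ → C)} {k : ℕ} {Γ : Fin k → Set D.Q}

noncomputable def MonotoneDecomposition.memory (hΓ : MonotoneDecomposition D W Γ) :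
    MemStruct C :=
  ⟨Fin k, (hΓ.1 D.init).choose, fun i c => (hΓ.2.1 c i).choose⟩

lemma MonotoneDecomposition.δStar_mem (hΓ : MonotoneDecomposition D W Γ) :
    ∀ (w : List C) {q : D.Q} {i : Fin k}, q ∈ Γ i →
      D.δStar q w ∈ Γ (hΓ.memory.updStar i w)
  | [], _, _, hq => hq
  | c :: w, q, i, hq => hΓ.δStar_mem w ((hΓ.2.1 c i).choose_spec ⟨q, hq, rfl⟩)

lemma MonotoneDecomposition.stronglyMonotone_memory (hΓ : MonotoneDecomposition D W Γ) :
    StronglyMonotone hΓ.memory W := by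
  intro w₁ w₂ hupd
  have hmem : ∀ w, D.δStar D.init w ∈ Γ (hΓ.memory.updStar hΓ.memory.init w) :=
    fun w => hΓ.δStar_mem w (hΓ.1 D.init).choose_spec
  have h₁ := hmem w₁
  rw [hupd] at h₁
  exact (hΓ.2.2 _ _ h₁ _ (hmem w₂)).imp (· w₁ w₂ rfl rfl) (· w₂ w₁ rfl rfl)

variable (D) in
def statesAt (N : MemStruct C) (m : N.M) : Set D.Q :=
  {q | ∃ w, D.δStar D.init w = q ∧ N.updStar N.init w = m}

lemma monotoneDecomposition_statesAt (hreach : ∀ q : D.Q, ∃ w : List C, D.δStar D.init w = q)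
    (hW : StateDeterminesCont D W) {N : MemStruct C} (e : N.M ≃ Fin k)
    (hN : StronglyMonotone N W) :
    MonotoneDecomposition D W (statesAt D N ∘ e.symm) := by
  refine ⟨fun q => ?_, fun c i => ⟨e (N.upd (e.symm i) c), ?_⟩, ?_⟩
  · obtain ⟨w, hw⟩ := hreach q
    exact ⟨e (N.updStar N.init w), w, hw, (e.symm_apply_apply _).symm⟩
  · rintro _ ⟨q, ⟨w, rfl, hw⟩, rfl⟩
    refine ⟨w ++ [c], D.δStar_append _ _ _, ?_⟩
    rw [N.updStar_append_s13, hw, e.symm_apply_apply]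
    rfl
  · rintro i _ ⟨w₁, rfl, hw₁⟩ _ ⟨w₂, rfl, hw₂⟩
    exact hW.stateComparable (hN w₁ w₂ (hw₁.trans hw₂.symm))

end Decomposition

theorem monotoneDecomposition_iff_stronglyMonotone_general {C : Type}
    (D : DetAuto C) (qfin : D.Q)
    (hF : D.F = {qfin})
    (habs : ∀ c : C, D.δ qfin c = qfin)
    (hreach : ∀ q : D.Q, ∃ w : List C, D.δStar D.init w = q)
    (W : Set (ℕ → C))
    (hW : W = SafeObj D.lang ∨ W = ReachObj D.lang)
    (k : ℕ) :
    (∃ Γ : Fin k → Set D.Q, MonotoneDecomposition D W Γ) ↔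
      ∃ N : MemStruct C, Nonempty (N.M ≃ Fin k) ∧ StronglyMonotone N W := by
  have hclosed : ∀ q ∈ D.F, ∀ c, D.δ q c ∈ D.F := by
    rw [hF]
    rintro q rfl c
    exact habs c
  have hcont : StateDeterminesCont D W := by
    rcases hW with rfl | rfl
    · exact (stateDeterminesCont_reachObj_lang hclosed).compl
    · exact stateDeterminesCont_reachObj_lang hclosed
  constructor
  · rintro ⟨Γ, hΓ⟩
    exact ⟨hΓ.memory, ⟨Equiv.refl _⟩, hΓ.stronglyMonotone_memory⟩
  · rintro ⟨N, ⟨e⟩, hN⟩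
    exact ⟨_, monotoneDecomposition_statesAt hreach hcont e hN⟩

/-- an automaton `D` (single absorbing final state, all states
reachable) admits a monotone decomposition with `k` sets iff there is a memory
structure with `k` states making the derived reachability or safety objective
strongly monotone. -/
theorem monotoneDecomposition_iff_stronglyMonotone {C : Type} [Nonempty C]
    (D : DetAuto C) (qfin : D.Q)
    (hF : D.F = {qfin})
    (habs : ∀ c : C, D.δ qfin c = qfin)
    (hreach : ∀ q : D.Q, ∃ w : List C, D.δStar D.init w = q)
    (W : Set (ℕ → C))
    (hW : W = SafeObj D.lang ∨ W = ReachObj D.lang)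
    (k : ℕ) :
    (∃ Γ : Fin k → Set D.Q, MonotoneDecomposition D W Γ) ↔
      ∃ N : MemStruct C, Nonempty (N.M ≃ Fin k) ∧ StronglyMonotone N W :=
  monotoneDecomposition_iff_stronglyMonotone_general D qfin hF habs hreach W hW k

end RegularMemory
end
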